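/- Let A_c, B_c be n_c×n_c real symmetric positive semidefinite matrices with A_c ≠ 0 and R(B_c) = R(A_c), let s = rank(A_c), and set α₁ = λ_{n_c−s+1}(B_c† A_c) and α₂ = λ_max(B_c† A_c). Define B̃_c† := 2B_c† − B_c† A_c B_c†. If α₂ < 2, then β₁ v_cᵀ A_c† v_c ≤ v_cᵀ B̃_c† v_c ≤ β₂ v_cᵀ A_c† v_c for all v_c ∈ ℝ^{n_c}, where β₁ = (2−α₁)α₁ if α₂ ≤ 1, β₁ = min{(2−α₁)α₁, (2−α₂)α₂} if α₁ ≤ 1 < α₂ < 2, β₁ = (2−α₂)α₂ if 1 < α₁ ≤ α₂ < 2; and β₂ = (2−α₂)α₂ if α₂ ≤ 1, β₂ = 1 if α₁ ≤ 1 < α₂ < 2, β₂ = (2−α₁)α₁ if 1 < α₁ ≤ α₂ < 2. -/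

import Mathlib

/-!
Write `Q = (B_c†)^{1/2}` and `M = Q A_c Q`. Then `2B_c† - B_c†A_cB_c† = Q (2 - M) Q`, and since
`R(B_c) = R(A_c)` the congruence by `Q` loses nothing: `A_c† = Q M† Q`, `rank M = rank A_c`, and
the range of `Q` lies in that of `M`. On that range `2 - M` agrees with `g(M)`, where
`g(t) = (2 - t) t t⁻¹` vanishes at `0` just like `t ↦ t⁻¹`. So both quadratic forms are
`Q`-congruences of functions of `M`, and it suffices that `β₁ t⁻¹ ≤ g(t) ≤ β₂ t⁻¹` on the spectrum
of `M`: trivially at `t = 0`, and for the nonzero eigenvalues, which lie in `[α₁, α₂]`, because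
`β₁` and `β₂` are the minimum and the maximum of the concave function `(2 - t) t` there.
-/

open Matrix

/-- Euclidean norm of a vector in `ℝⁿ`. -/
noncomputable def enorm {n : ℕ} (v : Fin n → ℝ) : ℝ := Real.sqrt (v ⬝ᵥ v)

/-- The `A`-seminorm `‖v‖_A = sqrt (vᵀ A v)` of a vector. -/
noncomputable def vnorm {n : ℕ} (A : Matrix (Fin n) (Fin n) ℝ) (v : Fin n → ℝ) : ℝ :=
  Real.sqrt (v ⬝ᵥ A.mulVec v)

/-- The `A`-seminorm of a matrix: sup over `v ∉ N(A)` of `‖Xv‖_A / ‖v‖_A`. -/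
noncomputable def matNorm {n : ℕ} (A X : Matrix (Fin n) (Fin n) ℝ) : ℝ :=
  sSup ((fun v => vnorm A (X.mulVec v) / vnorm A v) '' {v | A.mulVec v ≠ 0})

/-- Penrose conditions: `X` is the Moore–Penrose inverse of `S`. -/
def IsMP {m : ℕ} (S X : Matrix (Fin m) (Fin m) ℝ) : Prop :=
  S * X * S = S ∧ X * S * X = X ∧ (S * X)ᵀ = S * X ∧ (X * S)ᵀ = X * S

/-- `eigk S k` is the `k`-th smallest eigenvalue (1-indexed, counted with
multiplicity) of a symmetric matrix `S` (junk value otherwise). -/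
noncomputable def eigk {m : ℕ} (S : Matrix (Fin m) (Fin m) ℝ) (k : ℕ) : ℝ :=
  if hS : S.IsHermitian then
    if h : k - 1 < m then hS.eigenvalues (Tuple.sort hS.eigenvalues ⟨k - 1, h⟩) else 0
  else 0

/-- The square root of a positive semidefinite matrix, as `Matrix.PosSemidef.sqrt` was
defined in Mathlib (Dec 2024); that definition has since been removed. -/
noncomputable def posSemidefSqrt {n : ℕ} {A : Matrix (Fin n) (Fin n) ℝ} (hA : A.PosSemidef) :
    Matrix (Fin n) (Fin n) ℝ :=
  (hA.1.eigenvectorUnitary : Matrix (Fin n) (Fin n) ℝ) *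
    diagonal ((↑) ∘ (hA.1.eigenvalues · |>.sqrt)) *
    (star hA.1.eigenvectorUnitary : Matrix (Fin n) (Fin n) ℝ)

open scoped MatrixOrder

section FunctionalCalculus

variable {n : ℕ} {M : Matrix (Fin n) (Fin n) ℝ}

lemma isSymm_cfc (f : ℝ → ℝ) : (cfc f M).IsSymm := by
  rw [← isHermitian_iff_isSymm, isHermitian_iff_isSelfAdjoint]
  exact cfc_predicate f M

lemma cfc_mul_cfc (f g : ℝ → ℝ) : cfc f M * cfc g M = cfc (fun t => f t * g t) M :=
  (cfc_mul f g M (M.finite_real_spectrum.continuousOn f)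
    (M.finite_real_spectrum.continuousOn g)).symm

theorem isMP_cfc_inv (hM : M.IsHermitian) : IsMP M (cfc (fun t : ℝ => t⁻¹) M) := by
  have hid : cfc (fun t : ℝ => t) M = M := cfc_id' ℝ M hM.isSelfAdjoint
  have hR : M * cfc (fun t : ℝ => t⁻¹) M = cfc (fun t : ℝ => t * t⁻¹) M := by
    rw [← cfc_mul_cfc, hid]
  have hR' : cfc (fun t : ℝ => t⁻¹) M * M = cfc (fun t : ℝ => t⁻¹ * t) M := by
    rw [← cfc_mul_cfc, hid]
  refine ⟨?_, ?_, by rw [hR]; exact isSymm_cfc _, by rw [hR']; exact isSymm_cfc _⟩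
  · calc M * cfc (fun t : ℝ => t⁻¹) M * M
          = cfc (fun t : ℝ => t * t⁻¹) M * cfc (fun t : ℝ => t) M := by rw [hR, hid]
      _ = cfc (fun t : ℝ => t) M := by
          rw [cfc_mul_cfc]
          exact cfc_congr fun t _ => mul_inv_mul_cancel t
      _ = M := hid
  · rw [hR', cfc_mul_cfc]
    exact cfc_congr fun t _ => by simpa using mul_inv_mul_cancel t⁻¹

lemma cfc_two_sub_mul_mul_inv (hM : M.IsHermitian) :
    cfc (fun t : ℝ => (2 - t) * t * t⁻¹) M = ((2 : ℝ) • 1 - M) * M * cfc (fun t : ℝ => t⁻¹) M := by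
  rw [← cfc_mul_cfc, ← cfc_mul_cfc, cfc_sub (fun _ => 2) (fun t => t) M
    (M.finite_real_spectrum.continuousOn _) (M.finite_real_spectrum.continuousOn _),
    cfc_const 2 M hM.isSelfAdjoint, cfc_id' ℝ M hM.isSelfAdjoint, Algebra.algebraMap_eq_smul_one]

end FunctionalCalculus

section Sqrt

variable {n : ℕ} {A : Matrix (Fin n) (Fin n) ℝ}

lemma posSemidefSqrt_eq_cfc (hA : A.PosSemidef) : posSemidefSqrt hA = cfc Real.sqrt A := by
  rw [hA.1.cfc_eq, IsHermitian.cfc, Unitary.conjStarAlgAut_apply]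
  rfl

lemma posSemidefSqrt_mul_self (hA : A.PosSemidef) : posSemidefSqrt hA * posSemidefSqrt hA = A := by
  rw [posSemidefSqrt_eq_cfc, cfc_mul_cfc]
  conv_rhs => rw [← cfc_id' ℝ A]
  exact cfc_congr fun t ht => Real.mul_self_sqrt (spectrum_nonneg_of_nonneg hA.nonneg ht)

lemma posSemidefSqrt_isSymm (hA : A.PosSemidef) : (posSemidefSqrt hA).IsSymm := by
  rw [posSemidefSqrt_eq_cfc]
  exact isSymm_cfc _

end Sqrt

namespace IsMP

variable {m : ℕ} {S X Y : Matrix (Fin m) (Fin m) ℝ}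

theorem unique (hX : IsMP S X) (hY : IsMP S Y) : X = Y := by
  obtain ⟨hX1, hX2, hX3, hX4⟩ := hX
  obtain ⟨hY1, hY2, hY3, hY4⟩ := hY
  have hSX : S * X = S * Y := by
    calc S * X = (S * Y * S * X)ᵀ := by rw [hY1, hX3]
      _ = (S * X)ᵀ * (S * Y)ᵀ := by rw [← transpose_mul, mul_assoc (S * Y)]
      _ = S * X * (S * Y) := by rw [hX3, hY3]
      _ = S * Y := by rw [← mul_assoc, hX1]
  have hXS : X * S = Y * S := by
    calc X * S = (X * (S * Y * S))ᵀ := by rw [hY1, hX4]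
      _ = (Y * S)ᵀ * (X * S)ᵀ := by rw [← transpose_mul]; simp only [mul_assoc]
      _ = Y * S * (X * S) := by rw [hX4, hY4]
      _ = Y * S := by rw [mul_assoc, ← mul_assoc S, hX1]
  calc X = X * S * X := hX2.symm
    _ = Y * S * Y := by rw [hXS, mul_assoc, hSX, ← mul_assoc]
    _ = Y := hY2

theorem transpose (h : IsMP S X) : IsMP Sᵀ Xᵀ := by
  obtain ⟨h1, h2, h3, h4⟩ := h
  refine ⟨?_, ?_, ?_, ?_⟩
  · rw [← transpose_mul, ← transpose_mul, ← mul_assoc, h1]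
  · rw [← transpose_mul, ← transpose_mul, ← mul_assoc, h2]
  · rw [← transpose_mul, transpose_transpose, h4]
  · rw [← transpose_mul, transpose_transpose, h3]

theorem isSymm (hS : S.IsSymm) (h : IsMP S X) : X.IsSymm :=
  (hS.eq ▸ h.transpose).unique h

end IsMP

section Congruence

lemma exists_eq_mul_of_range_subset {m k l : Type*} [Fintype k] [Fintype l] [DecidableEq k]
    {A : Matrix m k ℝ} {B : Matrix m l ℝ}
    (h : {v | ∃ w, v = A *ᵥ w} ⊆ {v | ∃ w, v = B *ᵥ w}) : ∃ C : Matrix l k ℝ, A = B * C := by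
  choose w hw using fun j => h ⟨Pi.single j 1, rfl⟩
  refine ⟨(Matrix.of w)ᵀ, ext_of_mulVec_single fun j => ?_⟩
  rw [hw j, ← mulVec_mulVec, mulVec_single_one]
  rfl

lemma Matrix.transpose_mul_self_eq_zero {m k : Type*} [Fintype m] {X : Matrix m k ℝ} :
    Xᵀ * X = 0 ↔ X = 0 := by
  rw [← conjTranspose_eq_transpose_of_trivial]
  exact conjTranspose_mul_self_eq_zero

lemma Matrix.PosSemidef.mul_eq_zero_of_transpose_mul_mul_eq_zero {n : ℕ} {k : Type*}
    {A : Matrix (Fin n) (Fin n) ℝ} (hA : A.PosSemidef) {X : Matrix (Fin n) k ℝ}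
    (h : Xᵀ * A * X = 0) : A * X = 0 := by
  obtain ⟨S, hS, rfl⟩ : ∃ S : Matrix (Fin n) (Fin n) ℝ, S.IsSymm ∧ S * S = A :=
    ⟨_, posSemidefSqrt_isSymm hA, posSemidefSqrt_mul_self hA⟩
  have hSX : S * X = 0 := by
    rw [← transpose_mul_self_eq_zero, transpose_mul, hS.eq, ← h]
    simp only [Matrix.mul_assoc]
  rw [Matrix.mul_assoc, hSX, Matrix.mul_zero]

variable {n : ℕ} {A B B' Q N : Matrix (Fin n) (Fin n) ℝ}

lemma IsMP.mul_mul_eq_of_eq_mul (hB' : IsMP B B')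
    (hAB : ∃ C : Matrix (Fin n) (Fin n) ℝ, A = B * C) : B * B' * A = A := by
  obtain ⟨C, rfl⟩ := hAB
  rw [← mul_assoc, hB'.1]

lemma IsMP.mul_mul_eq_of_mul_self_eq (hQ : Q.IsSymm) (hB' : IsMP B B') (hQQ : Q * Q = B') :
    Q * (B * B') = Q := by
  have hker : B' * (1 - B * B') = 0 := by rw [mul_sub, mul_one, ← mul_assoc, hB'.2.1, sub_self]
  have h : (Q * (1 - B * B'))ᵀ * (Q * (1 - B * B')) = 0 := by
    rw [transpose_mul, hQ.eq, mul_assoc, ← mul_assoc Q, hQQ, hker, mul_zero]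
  rw [transpose_mul_self_eq_zero, mul_sub, mul_one, sub_eq_zero] at h
  exact h.symm

lemma IsMP.mul_mul_mul_eq_of_mul_self_eq (hQ : Q.IsSymm) (hB' : IsMP B B') (hQQ : Q * Q = B') :
    B * B' * Q = Q := by
  rw [← hB'.2.2.1, ← hQ.eq, ← transpose_mul, hB'.mul_mul_eq_of_mul_self_eq hQ hQQ]

lemma mul_eq_zero_of_mul_mul_mul_eq_zero (hA : A.PosSemidef) (hB : B.IsSymm) (hQ : Q.IsSymm)
    (hB' : IsMP B B') (hQQ : Q * Q = B') (hBA : ∃ C : Matrix (Fin n) (Fin n) ℝ, B = A * C)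
    {W : Matrix (Fin n) (Fin n) ℝ} (hW : Q * A * Q * W = 0) : Q * W = 0 := by
  have hAQW : A * (Q * W) = 0 := by
    refine hA.mul_eq_zero_of_transpose_mul_mul_eq_zero ?_
    rw [transpose_mul, hQ.eq, show Wᵀ * Q * A * (Q * W) = Wᵀ * (Q * A * Q * W) by
      simp only [mul_assoc], hW, mul_zero]
  have hBQW : B * (Q * W) = 0 := by
    obtain ⟨C, hC⟩ := hBA
    rw [← hB.eq, hC, transpose_mul, (isHermitian_iff_isSymm.mp hA.1).eq, mul_assoc, hAQW,
      mul_zero]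
  -- `Q W` lies in the range of `B`, which meets the kernel of `B` only in `0`.
  rw [← transpose_mul_self_eq_zero]
  calc (Q * W)ᵀ * (Q * W) = (B * (Q * W))ᵀ * (B' * Q * W) := by
        rw [transpose_mul B, hB.eq]
        nth_rewrite 2 [← hB'.mul_mul_mul_eq_of_mul_self_eq hQ hQQ]
        simp only [mul_assoc]
    _ = 0 := by rw [hBQW, transpose_zero, zero_mul]

lemma Matrix.IsSymm.mul_mul (hA : A.IsSymm) (hQ : Q.IsSymm) :
    (Q * A * Q).IsSymm := by
  rw [IsSymm, transpose_mul, transpose_mul, hA.eq, hQ.eq, mul_assoc]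

-- `M N` projects onto the range of `M = Q A Q`, so this says that the range of `Q` lies in it.
lemma mul_mul_mul_mp_mul_eq (hA : A.PosSemidef) (hB : B.IsSymm) (hQ : Q.IsSymm)
    (hB' : IsMP B B') (hQQ : Q * Q = B') (hBA : ∃ C : Matrix (Fin n) (Fin n) ℝ, B = A * C)
    (hN : IsMP (Q * A * Q) N) : Q * A * Q * N * Q = Q := by
  have hMs : (Q * A * Q).IsSymm := (isHermitian_iff_isSymm.mp hA.1).mul_mul hQ
  have hker : Q * A * Q * (1 - N * (Q * A * Q)) = 0 := by
    rw [mul_sub, mul_one, ← mul_assoc, hN.1, sub_self]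
  have hQNM := mul_eq_zero_of_mul_mul_mul_eq_zero hA hB hQ hB' hQQ hBA hker
  rw [mul_sub, mul_one, sub_eq_zero] at hQNM
  calc Q * A * Q * N * Q = (Q * (N * (Q * A * Q)))ᵀ := by
        rw [transpose_mul, transpose_mul, hMs.eq, (hN.isSymm hMs).eq, hQ.eq, mul_assoc]
    _ = Q := by rw [← hQNM, hQ.eq]

theorem isMP_mul_mul (hA : A.PosSemidef) (hB : B.IsSymm) (hQ : Q.IsSymm) (hB' : IsMP B B')
    (hQQ : Q * Q = B') (hAB : ∃ C : Matrix (Fin n) (Fin n) ℝ, A = B * C)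
    (hBA : ∃ C : Matrix (Fin n) (Fin n) ℝ, B = A * C) (hN : IsMP (Q * A * Q) N) :
    IsMP A (Q * N * Q) := by
  have hAs : A.IsSymm := isHermitian_iff_isSymm.mp hA.1
  have hXs : (Q * N * Q).IsSymm := (hN.isSymm (hAs.mul_mul hQ)).mul_mul hQ
  have hPA : B * B' * A = A := hB'.mul_mul_eq_of_eq_mul hAB
  have hQP : Q * (B * B') = Q := hB'.mul_mul_eq_of_mul_self_eq hQ hQQ
  have hPQ : B * B' * Q = Q := hB'.mul_mul_mul_eq_of_mul_self_eq hQ hQQ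
  have hMNQ := mul_mul_mul_mp_mul_eq hA hB hQ hB' hQQ hBA hN
  have hAX : A * (Q * N * Q) = B * B' := by
    have hQ0 : Q * (A * (Q * N * Q) - B * B') = 0 := by
      rw [mul_sub, hQP, sub_eq_zero]
      simpa only [← mul_assoc] using hMNQ
    have hB'0 : B' * (A * (Q * N * Q) - B * B') = 0 := by
      nth_rewrite 1 [← hQQ]
      rw [mul_assoc, hQ0, mul_zero]
    have hP0 : B * B' * (A * (Q * N * Q) - B * B') = 0 := by
      rw [mul_assoc, hB'0, mul_zero]
    rwa [mul_sub, ← mul_assoc (B * B') A, hPA, ← mul_assoc (B * B') B, hB'.1,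
      sub_eq_zero] at hP0
  have hXA : Q * N * Q * A = B * B' := by
    rw [← hB'.2.2.1, ← hAX, transpose_mul, hXs.eq, hAs.eq]
  refine ⟨by rw [hAX, hPA], ?_, by rw [hAX, hB'.2.2.1], by rw [hXA, hB'.2.2.1]⟩
  rw [hXA, ← mul_assoc, ← mul_assoc, hPQ]

lemma rank_mul_mul_eq (hA : A.IsSymm) (hB : B.IsSymm) (hQ : Q.IsSymm) (hB' : IsMP B B')
    (hQQ : Q * Q = B') (hAB : ∃ C : Matrix (Fin n) (Fin n) ℝ, A = B * C) :
    (Q * A * Q).rank = A.rank := by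
  refine le_antisymm ((rank_mul_le_left _ _).trans (rank_mul_le_right _ _)) ?_
  have hPA : B * B' * A = A := hB'.mul_mul_eq_of_eq_mul hAB
  have hB's : B'ᵀ = B' := by rw [← hQQ, transpose_mul, hQ.eq]
  have hAP : A * (B' * B) = A := by
    rw [← hB's, ← hB.eq, ← transpose_mul, ← hA.eq, ← transpose_mul, hPA]
  have hsandwich : B * Q * (Q * A * Q) * Q * B = A := by
    calc B * Q * (Q * A * Q) * Q * B = B * (Q * Q) * A * ((Q * Q) * B) := by simp only [mul_assoc]
      _ = A := by rw [hQQ, hPA, hAP]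
  calc A.rank = (B * Q * (Q * A * Q) * Q * B).rank := by rw [hsandwich]
    _ ≤ (Q * A * Q).rank :=
      ((rank_mul_le_left _ _).trans (rank_mul_le_left _ _)).trans (rank_mul_le_right _ _)

lemma two_smul_sub_mul_mul_eq (hA : A.PosSemidef) (hB : B.IsSymm) (hQ : Q.IsSymm)
    (hB' : IsMP B B') (hQQ : Q * Q = B') (hBA : ∃ C : Matrix (Fin n) (Fin n) ℝ, B = A * C) :
    (2 : ℝ) • B' - B' * A * B' = Q * cfc (fun t : ℝ => (2 - t) * t * t⁻¹) (Q * A * Q) * Q := by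
  have hM : (Q * A * Q).IsHermitian :=
    isHermitian_iff_isSymm.mpr ((isHermitian_iff_isSymm.mp hA.1).mul_mul hQ)
  have hMNQ := mul_mul_mul_mp_mul_eq hA hB hQ hB' hQQ hBA (isMP_cfc_inv hM)
  calc (2 : ℝ) • B' - B' * A * B' = Q * ((2 : ℝ) • 1 - Q * A * Q) * Q := by
        rw [← hQQ]
        simp only [mul_sub, sub_mul, mul_smul_comm, smul_mul_assoc, mul_one, mul_assoc]
    _ = Q * ((2 : ℝ) • 1 - Q * A * Q) * (Q * A * Q * cfc (fun t : ℝ => t⁻¹) (Q * A * Q) * Q) := by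
        rw [hMNQ]
    _ = Q * cfc (fun t : ℝ => (2 - t) * t * t⁻¹) (Q * A * Q) * Q := by
        rw [cfc_two_sub_mul_mul_inv hM]
        simp only [mul_assoc]

end Congruence

section Beta

-- `β₁` and `β₂` of the statement: the minimum and the maximum of `t ↦ (2 - t) t` on `[α₁, α₂]`.
noncomputable def lowerBeta (α₁ α₂ : ℝ) : ℝ :=
  if α₂ ≤ 1 then (2 - α₁) * α₁
  else if α₁ ≤ 1 then min ((2 - α₁) * α₁) ((2 - α₂) * α₂)
  else (2 - α₂) * α₂

noncomputable def upperBeta (α₁ α₂ : ℝ) : ℝ :=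
  if α₂ ≤ 1 then (2 - α₂) * α₂
  else if α₁ ≤ 1 then 1
  else (2 - α₁) * α₁

variable {α₁ α₂ t : ℝ}

lemma lowerBeta_le (h₁ : α₁ ≤ t) (h₂ : t ≤ α₂) : lowerBeta α₁ α₂ ≤ (2 - t) * t := by
  unfold lowerBeta
  split_ifs with h h'
  · nlinarith
  · rcases le_total (t + α₁) 2 with hc | hc
    · exact (min_le_left _ _).trans (by nlinarith)
    · exact (min_le_right _ _).trans (by nlinarith)
  · nlinarith

lemma le_upperBeta (h₁ : α₁ ≤ t) (h₂ : t ≤ α₂) : (2 - t) * t ≤ upperBeta α₁ α₂ := by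
  unfold upperBeta
  split_ifs with h h'
  · nlinarith
  · nlinarith [sq_nonneg (t - 1)]
  · nlinarith

end Beta

lemma Tuple.card_filter_le_le_sort_symm {m : ℕ} {α : Type*} [LinearOrder α] (f : Fin m → α)
    {c : α} {i : Fin m} (h : c < f i) :
    (Finset.univ.filter fun j => f j ≤ c).card ≤ (Tuple.sort f).symm i := by
  calc (Finset.univ.filter fun j => f j ≤ c).card ≤ (Finset.Iio ((Tuple.sort f).symm i)).card := by
        refine Finset.card_le_card_of_injOn (Tuple.sort f).symm (fun j hj => ?_)
          (Tuple.sort f).symm.injective.injOn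
        simp only [Finset.coe_filter, Finset.mem_univ, true_and, Set.mem_ofPred_eq] at hj
        simp only [Finset.coe_Iio, Set.mem_Iio]
        by_contra! hle
        have := Tuple.monotone_sort f hle
        simp only [Function.comp_apply, Equiv.apply_symm_apply] at this
        exact (h.trans_le this).not_ge hj
    _ = (Tuple.sort f).symm i := Fin.card_Iio _

section Eigk

variable {m : ℕ} {S : Matrix (Fin m) (Fin m) ℝ}

lemma eigk_eq (hS : S.IsHermitian) {k : ℕ} (hk : k - 1 < m) :
    eigk S k = hS.eigenvalues (Tuple.sort hS.eigenvalues ⟨k - 1, hk⟩) := by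
  rw [eigk, dif_pos hS, dif_pos hk]

lemma Matrix.IsHermitian.eigenvalues_le_eigk (hS : S.IsHermitian) (i : Fin m) :
    hS.eigenvalues i ≤ eigk S m := by
  have hi := ((Tuple.sort hS.eigenvalues).symm i).isLt
  have hm : m - 1 < m := by omega
  rw [eigk_eq hS hm]
  simpa using Tuple.monotone_sort hS.eigenvalues
    (show (Tuple.sort hS.eigenvalues).symm i ≤ ⟨m - 1, hm⟩ from Fin.le_def.2 (by simp; omega))

lemma Matrix.PosSemidef.eigk_sub_rank_add_one_le (hS : S.PosSemidef) {i : Fin m}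
    (hi : hS.1.eigenvalues i ≠ 0) : eigk S (m - S.rank + 1) ≤ hS.1.eigenvalues i := by
  set μ := hS.1.eigenvalues
  have hzero : (Finset.univ.filter fun j => μ j ≤ 0).card = m - S.rank := by
    have hsplit := Finset.card_filter_add_card_filter_not (s := Finset.univ) (fun j => μ j ≤ 0)
    have hpos : (Finset.univ.filter fun j => ¬ μ j ≤ 0) = Finset.univ.filter fun j => μ j ≠ 0 :=
      Finset.filter_congr fun j _ => not_le.trans (hS.eigenvalues_nonneg j).lt_iff_ne'
    have hrank : S.rank = (Finset.univ.filter fun j => μ j ≠ 0).card := by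
      rw [hS.1.rank_eq_card_non_zero_eigs, Fintype.card_subtype]
    rw [hpos, Finset.card_univ, Fintype.card_fin] at hsplit
    omega
  have hle := Tuple.card_filter_le_le_sort_symm μ ((hS.eigenvalues_nonneg i).lt_of_ne' hi)
  rw [hzero] at hle
  have hk : m - S.rank + 1 - 1 < m := by omega
  rw [eigk_eq hS.1 hk]
  simpa using Tuple.monotone_sort μ
    (show (⟨m - S.rank + 1 - 1, hk⟩ : Fin m) ≤ (Tuple.sort μ).symm i from
      Fin.le_def.2 (by simp; omega))

lemma Matrix.PosSemidef.eigk_le_and_le_eigk_of_mem_spectrum (hS : S.PosSemidef) {t : ℝ}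
    (ht : t ∈ spectrum ℝ S) (ht0 : t ≠ 0) : eigk S (m - S.rank + 1) ≤ t ∧ t ≤ eigk S m := by
  rw [hS.1.spectrum_real_eq_range_eigenvalues] at ht
  obtain ⟨i, rfl⟩ := ht
  exact ⟨hS.eigk_sub_rank_add_one_le ht0, hS.1.eigenvalues_le_eigk i⟩

end Eigk

section LoewnerBounds

variable {n : ℕ} {M : Matrix (Fin n) (Fin n) ℝ} {α₁ α₂ : ℝ}

lemma lowerBeta_smul_cfc_inv_le (hM : M.PosSemidef)
    (hspec : ∀ t ∈ spectrum ℝ M, t ≠ 0 → α₁ ≤ t ∧ t ≤ α₂) :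
    lowerBeta α₁ α₂ • cfc (fun t : ℝ => t⁻¹) M ≤ cfc (fun t : ℝ => (2 - t) * t * t⁻¹) M := by
  rw [← cfc_const_mul _ _ M (M.finite_real_spectrum.continuousOn _)]
  refine cfc_mono (fun t ht => ?_) (M.finite_real_spectrum.continuousOn _)
    (M.finite_real_spectrum.continuousOn _)
  rcases eq_or_ne t 0 with rfl | ht0
  · simp
  obtain ⟨h₁, h₂⟩ := hspec t ht ht0
  exact mul_le_mul_of_nonneg_right (lowerBeta_le h₁ h₂)
    (inv_nonneg.2 (spectrum_nonneg_of_nonneg hM.nonneg ht))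

lemma cfc_le_upperBeta_smul_cfc_inv (hM : M.PosSemidef)
    (hspec : ∀ t ∈ spectrum ℝ M, t ≠ 0 → α₁ ≤ t ∧ t ≤ α₂) :
    cfc (fun t : ℝ => (2 - t) * t * t⁻¹) M ≤ upperBeta α₁ α₂ • cfc (fun t : ℝ => t⁻¹) M := by
  rw [← cfc_const_mul _ _ M (M.finite_real_spectrum.continuousOn _)]
  refine cfc_mono (fun t ht => ?_) (M.finite_real_spectrum.continuousOn _)
    (M.finite_real_spectrum.continuousOn _)
  rcases eq_or_ne t 0 with rfl | ht0
  · simp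
  obtain ⟨h₁, h₂⟩ := hspec t ht ht0
  exact mul_le_mul_of_nonneg_right (le_upperBeta h₁ h₂)
    (inv_nonneg.2 (spectrum_nonneg_of_nonneg hM.nonneg ht))

lemma Matrix.dotProduct_mul_mul_mulVec_le {Q X Y : Matrix (Fin n) (Fin n) ℝ} (hQ : Q.IsSymm)
    (h : X ≤ Y) (v : Fin n → ℝ) : v ⬝ᵥ (Q * X * Q) *ᵥ v ≤ v ⬝ᵥ (Q * Y * Q) *ᵥ v := by
  have hQ' : IsSelfAdjoint Q := by rwa [← isHermitian_iff_isSelfAdjoint, isHermitian_iff_isSymm]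
  have := (le_iff.mp (hQ'.conjugate_le_conjugate h)).dotProduct_mulVec_nonneg v
  rwa [star_trivial, sub_mulVec, dotProduct_sub, sub_nonneg] at this

lemma Matrix.dotProduct_mul_smul_mul_mulVec (Q X : Matrix (Fin n) (Fin n) ℝ) (β : ℝ)
    (v : Fin n → ℝ) : v ⬝ᵥ (Q * (β • X) * Q) *ᵥ v = β * (v ⬝ᵥ (Q * X * Q) *ᵥ v) := by
  rw [mul_smul_comm, smul_mul_assoc, smul_mulVec, dotProduct_smul, smul_eq_mul]

end LoewnerBounds

theorem stmt15_general {nc : ℕ} (Ac Bc : Matrix (Fin nc) (Fin nc) ℝ)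
    (hAc : Ac.PosSemidef) (hBc : Bc.PosSemidef)
    (hrange : {v : Fin nc → ℝ | ∃ w, v = Bc.mulVec w} =
      {v : Fin nc → ℝ | ∃ w, v = Ac.mulVec w})
    (Acd Bcd : Matrix (Fin nc) (Fin nc) ℝ)
    (hAcd : IsMP Ac Acd) (hBcd : IsMP Bc Bcd) (hBcdP : Bcd.PosSemidef)
    (α₁ α₂ : ℝ)
    (hα₁ : α₁ = eigk (posSemidefSqrt hBcdP * Ac * posSemidefSqrt hBcdP) (nc - Ac.rank + 1))
    (hα₂ : α₂ = eigk (posSemidefSqrt hBcdP * Ac * posSemidefSqrt hBcdP) nc)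
    (β₁ β₂ : ℝ)
    (hβ₁ : β₁ = if α₂ ≤ 1 then (2 - α₁) * α₁
      else if α₁ ≤ 1 then min ((2 - α₁) * α₁) ((2 - α₂) * α₂)
      else (2 - α₂) * α₂)
    (hβ₂ : β₂ = if α₂ ≤ 1 then (2 - α₂) * α₂
      else if α₁ ≤ 1 then 1
      else (2 - α₁) * α₁) :
    ∀ v : Fin nc → ℝ,
      β₁ * (v ⬝ᵥ Acd.mulVec v) ≤
          v ⬝ᵥ ((2 : ℝ) • Bcd - Bcd * Ac * Bcd).mulVec v ∧
        v ⬝ᵥ ((2 : ℝ) • Bcd - Bcd * Ac * Bcd).mulVec v ≤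
          β₂ * (v ⬝ᵥ Acd.mulVec v) := by
  set Q := posSemidefSqrt hBcdP
  set M := Q * Ac * Q
  have hQ : Q.IsSymm := posSemidefSqrt_isSymm hBcdP
  have hQQ : Q * Q = Bcd := posSemidefSqrt_mul_self hBcdP
  have hBs : Bc.IsSymm := isHermitian_iff_isSymm.mp hBc.1
  have hM : M.PosSemidef := by
    simpa only [conjTranspose_eq_transpose_of_trivial, hQ.eq] using hAc.conjTranspose_mul_mul_same Q
  have hAB := exists_eq_mul_of_range_subset hrange.ge
  have hBA := exists_eq_mul_of_range_subset hrange.le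
  have hAcd_eq : Acd = Q * cfc (fun t : ℝ => t⁻¹) M * Q :=
    hAcd.unique (isMP_mul_mul hAc hBs hQ hBcd hQQ hAB hBA (isMP_cfc_inv hM.1))
  have hspec : ∀ t ∈ spectrum ℝ M, t ≠ 0 → α₁ ≤ t ∧ t ≤ α₂ := by
    rw [hα₁, hα₂, ← rank_mul_mul_eq (isHermitian_iff_isSymm.mp hAc.1) hBs hQ hBcd hQQ hAB]
    exact fun t ht ht0 => hM.eigk_le_and_le_eigk_of_mem_spectrum ht ht0
  subst hβ₁ hβ₂
  intro v
  rw [two_smul_sub_mul_mul_eq hAc hBs hQ hBcd hQQ hBA, hAcd_eq, ← dotProduct_mul_smul_mul_mulVec,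
    ← dotProduct_mul_smul_mul_mulVec]
  exact ⟨dotProduct_mul_mul_mulVec_le hQ (lowerBeta_smul_cfc_inv_le hM hspec) v,
    dotProduct_mul_mul_mulVec_le hQ (cfc_le_upperBeta_smul_cfc_inv hM hspec) v⟩

theorem stmt15 {nc : ℕ} (Ac Bc : Matrix (Fin nc) (Fin nc) ℝ)
    (hAc : Ac.PosSemidef) (hBc : Bc.PosSemidef) (hAc0 : Ac ≠ 0)
    (hrange : {v : Fin nc → ℝ | ∃ w, v = Bc.mulVec w} =
      {v : Fin nc → ℝ | ∃ w, v = Ac.mulVec w})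
    (Acd Bcd : Matrix (Fin nc) (Fin nc) ℝ)
    (hAcd : IsMP Ac Acd) (hBcd : IsMP Bc Bcd) (hBcdP : Bcd.PosSemidef)
    (α₁ α₂ : ℝ)
    (hα₁ : α₁ = eigk (posSemidefSqrt hBcdP * Ac * posSemidefSqrt hBcdP) (nc - Ac.rank + 1))
    (hα₂ : α₂ = eigk (posSemidefSqrt hBcdP * Ac * posSemidefSqrt hBcdP) nc)
    (hα₂lt : α₂ < 2)
    (β₁ β₂ : ℝ)
    (hβ₁ : β₁ = if α₂ ≤ 1 then (2 - α₁) * α₁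
      else if α₁ ≤ 1 then min ((2 - α₁) * α₁) ((2 - α₂) * α₂)
      else (2 - α₂) * α₂)
    (hβ₂ : β₂ = if α₂ ≤ 1 then (2 - α₂) * α₂
      else if α₁ ≤ 1 then 1
      else (2 - α₁) * α₁) :
    ∀ v : Fin nc → ℝ,
      β₁ * (v ⬝ᵥ Acd.mulVec v) ≤
          v ⬝ᵥ ((2 : ℝ) • Bcd - Bcd * Ac * Bcd).mulVec v ∧
        v ⬝ᵥ ((2 : ℝ) • Bcd - Bcd * Ac * Bcd).mulVec v ≤
          β₂ * (v ⬝ᵥ Acd.mulVec v) :=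
  stmt15_general Ac Bc hAc hBc hrange Acd Bcd hAcd hBcd hBcdP α₁ α₂ hα₁ hα₂ β₁ β₂ hβ₁ hβ₂
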